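/- arXiv:2201.03205 — 4 statements merged into one kernel-verified Lean document; each statement's English description precedes it below -/
import Mathlib

section
/- Let G₁ be the real span of {h₁,h₂,h₃} and G₂ the real span of {h₄,h₅,h₆}, where these are the 4×4 block matrices h₁=diag(h,h), h₂=diag(e,e), h₃=diag(f,f), h₄=[[0,εh],[h,0]], h₅=[[0,εe],[e,0]], h₆=[[0,εf],[f,0]] with h,e,f the standard sl2 basis. Then [G₁,G₁] ⊆ G₁, [G₁,G₂] ⊆ G₂, and [G₂,G₂] ⊆ G₁. -/
open Matrix

lemma comm_span_mem {A : Type*} [Ring A] [Module ℝ A] [SMulCommClass ℝ A A]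
    [IsScalarTower ℝ A A] (s t : Set A) (G : Submodule ℝ A)
    (hst : ∀ x ∈ s, ∀ y ∈ t, x * y - y * x ∈ G) :
    ∀ X ∈ Submodule.span ℝ s, ∀ Y ∈ Submodule.span ℝ t, X * Y - Y * X ∈ G := by
  intro X hX
  induction hX using Submodule.span_induction with
  | mem x hx =>
      intro Y hY
      induction hY using Submodule.span_induction with
      | mem y hy => exact hst x hx y hy
      | zero => simpa using G.zero_mem
      | add y z _ _ hy hz =>
          have : x * (y + z) - (y + z) * x = (x * y - y * x) + (x * z - z * x) := by
            noncomm_ring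
          rw [this]; exact G.add_mem hy hz
      | smul c y _ hy =>
          have : x * (c • y) - (c • y) * x = c • (x * y - y * x) := by
            rw [mul_smul_comm, smul_mul_assoc, smul_sub]
          rw [this]; exact G.smul_mem c hy
  | zero => intro Y _; simpa using G.zero_mem
  | add x z _ _ hx hz =>
      intro Y hY
      have : (x + z) * Y - Y * (x + z) = (x * Y - Y * x) + (z * Y - Y * z) := by
        noncomm_ring
      rw [this]; exact G.add_mem (hx Y hY) (hz Y hY)
  | smul c x _ hx =>
      intro Y hY
      have : (c • x) * Y - Y * (c • x) = c • (x * Y - Y * x) := by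
        rw [mul_smul_comm, smul_mul_assoc, smul_sub]
      rw [this]; exact G.smul_mem c (hx Y hY)

set_option maxHeartbeats 4000000 in
theorem span_closure_G1_G2 (ε : ℝ) :
    let h : Matrix (Fin 2) (Fin 2) ℝ := !![1, 0; 0, -1]
    let e : Matrix (Fin 2) (Fin 2) ℝ := !![0, 1; 0, 0]
    let f : Matrix (Fin 2) (Fin 2) ℝ := !![0, 0; 1, 0]
    let h₁ := Matrix.fromBlocks h 0 0 h
    let h₂ := Matrix.fromBlocks e 0 0 e
    let h₃ := Matrix.fromBlocks f 0 0 f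
    let h₄ := Matrix.fromBlocks 0 (ε • h) h 0
    let h₅ := Matrix.fromBlocks 0 (ε • e) e 0
    let h₆ := Matrix.fromBlocks 0 (ε • f) f 0
    let G₁ : Submodule ℝ (Matrix (Fin 2 ⊕ Fin 2) (Fin 2 ⊕ Fin 2) ℝ) :=
      Submodule.span ℝ {h₁, h₂, h₃}
    let G₂ : Submodule ℝ (Matrix (Fin 2 ⊕ Fin 2) (Fin 2 ⊕ Fin 2) ℝ) :=
      Submodule.span ℝ {h₄, h₅, h₆}
    (∀ X ∈ G₁, ∀ Y ∈ G₁, X * Y - Y * X ∈ G₁) ∧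
    (∀ X ∈ G₁, ∀ Y ∈ G₂, X * Y - Y * X ∈ G₂) ∧
    (∀ X ∈ G₂, ∀ Y ∈ G₂, X * Y - Y * X ∈ G₁) := by
  intro h e f h₁ h₂ h₃ h₄ h₅ h₆ G₁ G₂
  have m1 : h₁ ∈ G₁ := Submodule.subset_span (by simp)
  have m2 : h₂ ∈ G₁ := Submodule.subset_span (by simp)
  have m3 : h₃ ∈ G₁ := Submodule.subset_span (by simp)
  have m4 : h₄ ∈ G₂ := Submodule.subset_span (by simp)
  have m5 : h₅ ∈ G₂ := Submodule.subset_span (by simp)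
  have m6 : h₆ ∈ G₂ := Submodule.subset_span (by simp)
  have mtac : ∀ (c : ℝ) (x y g : Matrix (Fin 2 ⊕ Fin 2) (Fin 2 ⊕ Fin 2) ℝ)
      (G : Submodule ℝ (Matrix (Fin 2 ⊕ Fin 2) (Fin 2 ⊕ Fin 2) ℝ)),
      g ∈ G → x * y - y * x = c • g → x * y - y * x ∈ G := by
    intro c x y g G hg heq
    rw [heq]; exact G.smul_mem c hg
  refine ⟨comm_span_mem _ _ _ ?_, comm_span_mem _ _ _ ?_, comm_span_mem _ _ _ ?_⟩ <;>
    intro x hx y hy <;>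
    simp only [Set.mem_insert_iff, Set.mem_singleton_iff] at hx hy
  · rcases hx with rfl | rfl | rfl <;> rcases hy with rfl | rfl | rfl
    · exact mtac 0 _ _ h₁ G₁ m1 (by simp)
    · refine mtac 2 _ _ h₂ G₁ m2 ?_
      simp only [h₁, h₂, h, e]
      ext i j
      rcases i with i|i <;> rcases j with j|j <;> fin_cases i <;> fin_cases j <;>
        simp [Matrix.mul_apply, Fintype.sum_sum_type, Fin.sum_univ_two] <;> ring
    · refine mtac (-2) _ _ h₃ G₁ m3 ?_
      simp only [h₁, h₃, h, f]
      ext i j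
      rcases i with i|i <;> rcases j with j|j <;> fin_cases i <;> fin_cases j <;>
        simp [Matrix.mul_apply, Fintype.sum_sum_type, Fin.sum_univ_two] <;> ring
    · refine mtac (-2) _ _ h₂ G₁ m2 ?_
      simp only [h₁, h₂, h, e]
      ext i j
      rcases i with i|i <;> rcases j with j|j <;> fin_cases i <;> fin_cases j <;>
        simp [Matrix.mul_apply, Fintype.sum_sum_type, Fin.sum_univ_two] <;> ring
    · exact mtac 0 _ _ h₁ G₁ m1 (by simp)
    · refine mtac 1 _ _ h₁ G₁ m1 ?_
      simp only [h₁, h₂, h₃, h, e, f]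
      ext i j
      rcases i with i|i <;> rcases j with j|j <;> fin_cases i <;> fin_cases j <;>
        simp [Matrix.mul_apply, Fintype.sum_sum_type, Fin.sum_univ_two] <;> ring
    · refine mtac 2 _ _ h₃ G₁ m3 ?_
      simp only [h₁, h₃, h, f]
      ext i j
      rcases i with i|i <;> rcases j with j|j <;> fin_cases i <;> fin_cases j <;>
        simp [Matrix.mul_apply, Fintype.sum_sum_type, Fin.sum_univ_two] <;> ring
    · refine mtac (-1) _ _ h₁ G₁ m1 ?_
      simp only [h₁, h₂, h₃, h, e, f]
      ext i j
      rcases i with i|i <;> rcases j with j|j <;> fin_cases i <;> fin_cases j <;>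
        simp [Matrix.mul_apply, Fintype.sum_sum_type, Fin.sum_univ_two] <;> ring
    · exact mtac 0 _ _ h₁ G₁ m1 (by simp)
  · rcases hx with rfl | rfl | rfl <;> rcases hy with rfl | rfl | rfl
    · refine mtac 0 _ _ h₄ G₂ m4 ?_
      simp only [h₁, h₄, h]
      ext i j
      rcases i with i|i <;> rcases j with j|j <;> fin_cases i <;> fin_cases j <;>
        simp [Matrix.mul_apply, Fintype.sum_sum_type, Fin.sum_univ_two] <;> ring
    · refine mtac 2 _ _ h₅ G₂ m5 ?_
      simp only [h₁, h₅, h, e]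
      ext i j
      rcases i with i|i <;> rcases j with j|j <;> fin_cases i <;> fin_cases j <;>
        simp [Matrix.mul_apply, Fintype.sum_sum_type, Fin.sum_univ_two] <;> ring
    · refine mtac (-2) _ _ h₆ G₂ m6 ?_
      simp only [h₁, h₆, h, f]
      ext i j
      rcases i with i|i <;> rcases j with j|j <;> fin_cases i <;> fin_cases j <;>
        simp [Matrix.mul_apply, Fintype.sum_sum_type, Fin.sum_univ_two] <;> ring
    · refine mtac (-2) _ _ h₅ G₂ m5 ?_
      simp only [h₂, h₄, h₅, h, e]
      ext i j
      rcases i with i|i <;> rcases j with j|j <;> fin_cases i <;> fin_cases j <;>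
        simp [Matrix.mul_apply, Fintype.sum_sum_type, Fin.sum_univ_two] <;> ring
    · refine mtac 0 _ _ h₄ G₂ m4 ?_
      simp only [h₂, h₄, h₅, h, e]
      ext i j
      rcases i with i|i <;> rcases j with j|j <;> fin_cases i <;> fin_cases j <;>
        simp [Matrix.mul_apply, Fintype.sum_sum_type, Fin.sum_univ_two] <;> ring
    · refine mtac 1 _ _ h₄ G₂ m4 ?_
      simp only [h₂, h₄, h₆, h, e, f]
      ext i j
      rcases i with i|i <;> rcases j with j|j <;> fin_cases i <;> fin_cases j <;>
        simp [Matrix.mul_apply, Fintype.sum_sum_type, Fin.sum_univ_two] <;> ring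
    · refine mtac 2 _ _ h₆ G₂ m6 ?_
      simp only [h₃, h₄, h₆, h, f]
      ext i j
      rcases i with i|i <;> rcases j with j|j <;> fin_cases i <;> fin_cases j <;>
        simp [Matrix.mul_apply, Fintype.sum_sum_type, Fin.sum_univ_two] <;> ring
    · refine mtac (-1) _ _ h₄ G₂ m4 ?_
      simp only [h₃, h₄, h₅, h, e, f]
      ext i j
      rcases i with i|i <;> rcases j with j|j <;> fin_cases i <;> fin_cases j <;>
        simp [Matrix.mul_apply, Fintype.sum_sum_type, Fin.sum_univ_two] <;> ring
    · refine mtac 0 _ _ h₄ G₂ m4 ?_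
      simp only [h₃, h₆, f]
      ext i j
      rcases i with i|i <;> rcases j with j|j <;> fin_cases i <;> fin_cases j <;>
        simp [Matrix.mul_apply, Fintype.sum_sum_type, Fin.sum_univ_two] <;> ring
  · rcases hx with rfl | rfl | rfl <;> rcases hy with rfl | rfl | rfl
    · exact mtac 0 _ _ h₁ G₁ m1 (by simp)
    · refine mtac (2*ε) _ _ h₂ G₁ m2 ?_
      simp only [h₂, h₄, h₅, h, e]
      ext i j
      rcases i with i|i <;> rcases j with j|j <;> fin_cases i <;> fin_cases j <;>
        simp [Matrix.mul_apply, Fintype.sum_sum_type, Fin.sum_univ_two] <;> ring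
    · refine mtac (-2*ε) _ _ h₃ G₁ m3 ?_
      simp only [h₃, h₄, h₆, h, f]
      ext i j
      rcases i with i|i <;> rcases j with j|j <;> fin_cases i <;> fin_cases j <;>
        simp [Matrix.mul_apply, Fintype.sum_sum_type, Fin.sum_univ_two] <;> ring
    · refine mtac (-2*ε) _ _ h₂ G₁ m2 ?_
      simp only [h₂, h₄, h₅, h, e]
      ext i j
      rcases i with i|i <;> rcases j with j|j <;> fin_cases i <;> fin_cases j <;>
        simp [Matrix.mul_apply, Fintype.sum_sum_type, Fin.sum_univ_two] <;> ring
    · exact mtac 0 _ _ h₁ G₁ m1 (by simp)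
    · refine mtac ε _ _ h₁ G₁ m1 ?_
      simp only [h₁, h₅, h₆, h, e, f]
      ext i j
      rcases i with i|i <;> rcases j with j|j <;> fin_cases i <;> fin_cases j <;>
        simp [Matrix.mul_apply, Fintype.sum_sum_type, Fin.sum_univ_two] <;> ring
    · refine mtac (2*ε) _ _ h₃ G₁ m3 ?_
      simp only [h₃, h₄, h₆, h, f]
      ext i j
      rcases i with i|i <;> rcases j with j|j <;> fin_cases i <;> fin_cases j <;>
        simp [Matrix.mul_apply, Fintype.sum_sum_type, Fin.sum_univ_two] <;> ring
    · refine mtac (-ε) _ _ h₁ G₁ m1 ?_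
      simp only [h₁, h₅, h₆, h, e, f]
      ext i j
      rcases i with i|i <;> rcases j with j|j <;> fin_cases i <;> fin_cases j <;>
        simp [Matrix.mul_apply, Fintype.sum_sum_type, Fin.sum_univ_two] <;> ring
    · exact mtac 0 _ _ h₁ G₁ m1 (by simp)
end

section
/- With the block embedding M_k as above (placing a 2×2 matrix in the k-th cyclic block diagonal with factor ε on wrapped entries), for any 2×2 matrices A, B and indices i,k ∈ {1,...,N}: the commutator [M_i(A), M_k(B)] equals M_{i+k-1}([A,B]) if i+k-1 ≤ N, and ε·M_{i+k-1-N}([A,B]) if i+k-1 > N. In particular, if A and B commute then M_i(A) and M_k(B) commute. -/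
open Matrix

/-- The `ε`-twisted cyclic block embedding: `Mblk N ε k A` is the `2N × 2N`
matrix (indexed by `Fin N × Fin 2`) whose `(i,j)` 2×2 block is `A` when
`i = j + (k-1)`, is `ε • A` when `i + N = j + (k-1)` (the wrapped-around upper
blocks), and `0` otherwise. -/
def Mblk (N : ℕ) (ε : ℝ) (k : ℕ) (A : Matrix (Fin 2) (Fin 2) ℝ) :
    Matrix (Fin N × Fin 2) (Fin N × Fin 2) ℝ :=
  fun p q =>
    if (p.1 : ℕ) = (q.1 : ℕ) + (k - 1) then A p.2 q.2
    else if (p.1 : ℕ) + N = (q.1 : ℕ) + (k - 1) then ε * A p.2 q.2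
    else 0

/-- scalar coefficient of a block entry -/
def cf (N : ℕ) (ε : ℝ) (k : ℕ) (p q : ℕ) : ℝ :=
  if p = q + (k - 1) then 1 else if p + N = q + (k - 1) then ε else 0

lemma Mblk_eq (N : ℕ) (ε : ℝ) (k : ℕ) (A : Matrix (Fin 2) (Fin 2) ℝ)
    (p q : Fin N × Fin 2) :
    Mblk N ε k A p q = cf N ε k (p.1 : ℕ) (q.1 : ℕ) * A p.2 q.2 := by
  simp only [Mblk, cf]
  split_ifs <;> ring

lemma cf_sum_single (N : ℕ) (ε : ℝ) (i : ℕ) (p : Fin N) (m0 : Fin N)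
    (h : (p : ℕ) = (m0 : ℕ) + (i - 1) ∨ (p : ℕ) + N = (m0 : ℕ) + (i - 1))
    (f : Fin N → ℝ) :
    ∑ m : Fin N, cf N ε i (p : ℕ) (m : ℕ) * f m
      = cf N ε i (p : ℕ) (m0 : ℕ) * f m0 := by
  apply Finset.sum_eq_single_of_mem _ (Finset.mem_univ m0)
  intro b _ hb
  have hb' : (b : ℕ) ≠ (m0 : ℕ) := fun hh => hb (Fin.ext hh)
  have hbN : (b : ℕ) < N := b.2
  have hmN : (m0 : ℕ) < N := m0.2
  have : cf N ε i (p : ℕ) (b : ℕ) = 0 := by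
    unfold cf
    split_ifs with h1 h2
    · omega
    · omega
    · rfl
  rw [this, zero_mul]

lemma cf_sum (N : ℕ) (hN : 1 ≤ N) (ε : ℝ) (i k : ℕ)
    (hi1 : 1 ≤ i) (hiN : i ≤ N) (hk1 : 1 ≤ k) (hkN : k ≤ N) (p q : Fin N) :
    ∑ m : Fin N, cf N ε i (p : ℕ) (m : ℕ) * cf N ε k (m : ℕ) (q : ℕ)
      = if i + k - 1 ≤ N then cf N ε (i + k - 1) (p : ℕ) (q : ℕ)
        else ε * cf N ε (i + k - 1 - N) (p : ℕ) (q : ℕ) := by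
  have hpN : (p : ℕ) < N := p.2
  have hqN : (q : ℕ) < N := q.2
  rcases le_or_gt (i - 1) (p : ℕ) with hp | hp
  · set m0 : Fin N := ⟨(p : ℕ) - (i - 1), by omega⟩ with hm0
    have hval : (m0 : ℕ) = (p : ℕ) - (i - 1) := rfl
    rw [cf_sum_single N ε i p m0 (by left; omega)]
    unfold cf
    rw [hval]
    split_ifs <;> first | ring1 | (exfalso; omega)
  · set m0 : Fin N := ⟨(p : ℕ) + N - (i - 1), by omega⟩ with hm0
    have hval : (m0 : ℕ) = (p : ℕ) + N - (i - 1) := rfl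
    rw [cf_sum_single N ε i p m0 (by right; omega)]
    unfold cf
    rw [hval]
    split_ifs <;> first | ring1 | (exfalso; omega)

lemma Mblk_mul (N : ℕ) (hN : 1 ≤ N) (ε : ℝ)
    (A B : Matrix (Fin 2) (Fin 2) ℝ) (i k : ℕ)
    (hi1 : 1 ≤ i) (hiN : i ≤ N) (hk1 : 1 ≤ k) (hkN : k ≤ N) :
    Mblk N ε i A * Mblk N ε k B
      = if i + k - 1 ≤ N then Mblk N ε (i + k - 1) (A * B)
        else ε • Mblk N ε (i + k - 1 - N) (A * B) := by
  have key : ∀ p q : Fin N × Fin 2,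
      (Mblk N ε i A * Mblk N ε k B) p q
        = (if i + k - 1 ≤ N then cf N ε (i + k - 1) (p.1 : ℕ) (q.1 : ℕ)
           else ε * cf N ε (i + k - 1 - N) (p.1 : ℕ) (q.1 : ℕ)) * (A * B) p.2 q.2 := by
    rintro ⟨p, a⟩ ⟨q, b⟩
    rw [Matrix.mul_apply, Fintype.sum_prod_type]
    have inner : ∀ m : Fin N,
        ∑ s : Fin 2, Mblk N ε i A (p, a) (m, s) * Mblk N ε k B (m, s) (q, b)
          = cf N ε i (p : ℕ) (m : ℕ) * cf N ε k (m : ℕ) (q : ℕ) * (A * B) a b := by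
      intro m
      rw [Matrix.mul_apply, Finset.mul_sum]
      apply Finset.sum_congr rfl
      intro s _
      rw [Mblk_eq, Mblk_eq]
      ring
    rw [Finset.sum_congr rfl fun m _ => inner m]
    rw [← Finset.sum_mul, cf_sum N hN ε i k hi1 hiN hk1 hkN p q]
  ext p q
  rw [key p q]
  split_ifs with h
  · rw [Mblk_eq]
  · rw [Matrix.smul_apply, Mblk_eq, smul_eq_mul]
    ring

lemma Mblk_sub (N : ℕ) (ε : ℝ) (k : ℕ) (X Y : Matrix (Fin 2) (Fin 2) ℝ) :
    Mblk N ε k (X - Y) = Mblk N ε k X - Mblk N ε k Y := by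
  ext p q
  simp only [Mblk, Matrix.sub_apply]
  split_ifs <;> ring

theorem Mblk_commutator (N : ℕ) (hN : 1 ≤ N) (ε : ℝ)
    (A B : Matrix (Fin 2) (Fin 2) ℝ)
    (i k : ℕ) (hi1 : 1 ≤ i) (hiN : i ≤ N) (hk1 : 1 ≤ k) (hkN : k ≤ N) :
    (i + k - 1 ≤ N →
      Mblk N ε i A * Mblk N ε k B - Mblk N ε k B * Mblk N ε i A
        = Mblk N ε (i + k - 1) (A * B - B * A)) ∧
    (N < i + k - 1 →
      Mblk N ε i A * Mblk N ε k B - Mblk N ε k B * Mblk N ε i A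
        = ε • Mblk N ε (i + k - 1 - N) (A * B - B * A)) ∧
    (A * B = B * A →
      Mblk N ε i A * Mblk N ε k B = Mblk N ε k B * Mblk N ε i A) := by
  have h1 := Mblk_mul N hN ε A B i k hi1 hiN hk1 hkN
  have h2 := Mblk_mul N hN ε B A k i hk1 hkN hi1 hiN
  rw [Nat.add_comm k i] at h2
  refine ⟨?_, ?_, ?_⟩
  · intro h
    rw [h1, h2, if_pos h, if_pos h, ← Mblk_sub]
  · intro h
    rw [h1, h2, if_neg (by omega), if_neg (by omega), ← smul_sub, ← Mblk_sub]
  · intro hAB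
    rw [h1, h2, hAB]
end

section
/- Suppose φ is a linear-operator-valued function of u that is hereditary (φ'[φf]g - φ'[φg]f = φ(φ'[f]g - φ'[g]f) for all f,g) and is a strong symmetry for each K_m = φᵐK₀ (φ'[K_m] = K_m'φ - φK_m'), and assume the base commutativity [K₀,K₀] = 0. Then the flows commute: [K_m, K_n] := K_m'[K_n] - K_n'[K_m] = 0 for all m,n ≥ 0. -/
/-- If `φ(u)` is hereditary and a strong symmetry for each flow `K m = φᵐ K₀`
(with the flows generated recursively by `K (m+1) u = φ u (K m u)`), and the base
commutativity `[K₀, K₀] = 0` holds, then all the flows commute: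
`[K_m, K_n] = K_m'[K_n] - K_n'[K_m] = 0`. -/
theorem flows_commute {S : Type*} [NormedAddCommGroup S] [NormedSpace ℝ S]
    (φ : S → S →L[ℝ] S) (K : ℕ → S → S)
    (hφ : Differentiable ℝ φ)
    (hK : ∀ m, Differentiable ℝ (K m))
    (hbase : ∀ u, fderiv ℝ (K 0) u (K 0 u) - fderiv ℝ (K 0) u (K 0 u) = 0)
    (hrec : ∀ m u, K (m + 1) u = φ u (K m u))
    (hereditary : ∀ u f g,
      fderiv ℝ φ u (φ u f) g - fderiv ℝ φ u (φ u g) f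
        = φ u (fderiv ℝ φ u f g - fderiv ℝ φ u g f))
    (hstrong : ∀ m u v,
      fderiv ℝ φ u (K m u) v
        = fderiv ℝ (K m) u (φ u v) - φ u (fderiv ℝ (K m) u v)) :
    ∀ m n u, fderiv ℝ (K m) u (K n u) - fderiv ℝ (K n) u (K m u) = 0 := by
  -- product rule for the recursion
  have step : ∀ m u v, fderiv ℝ (K (m + 1)) u v
      = fderiv ℝ φ u v (K m u) + φ u (fderiv ℝ (K m) u v) := by
    intro m u v
    have hKe : K (m + 1) = fun x => φ x (K m x) := funext (hrec m)
    rw [hKe, fderiv_clm_apply (hφ u) ((hK m) u)]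
    simp [add_comm]
  -- key recursion for the bracket
  have key : ∀ m n u,
      fderiv ℝ (K (m + 1)) u (K n u) - fderiv ℝ (K n) u (K (m + 1) u)
        = φ u (fderiv ℝ (K m) u (K n u) - fderiv ℝ (K n) u (K m u)) := by
    intro m n u
    rw [step m u (K n u), hstrong n u (K m u), hrec m u, map_sub]
    abel
  -- bracket with K 0 vanishes
  have h0 : ∀ m u, fderiv ℝ (K m) u (K 0 u) - fderiv ℝ (K 0) u (K m u) = 0 := by
    intro m
    induction m with
    | zero => exact hbase
    | succ m ih => intro u; rw [key m 0 u, ih u, map_zero]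
  -- bracket of K 0 with K n vanishes, by antisymmetry
  have h0' : ∀ n u, fderiv ℝ (K 0) u (K n u) - fderiv ℝ (K n) u (K 0 u) = 0 := by
    intro n u
    have := h0 n u
    rw [sub_eq_zero] at this ⊢
    exact this.symm
  intro m
  induction m with
  | zero => exact h0'
  | succ m ih => intro n u; rw [key m n u, ih n u, map_zero]
end

section
/- In an abstract setting where vector fields satisfy: [K_m, σ₀] = (2m+1)H K_{m-1} for m ≥ 1, [K_m, φⁿσ₀] = (2m+1)H K_{m+n-1}, [φˡσ₀, φⁿσ₀] = 2(l-n)φ^{l+n-1}Hσ₀, [K_i,K_j] = 0, and H commutes with φ and with the bracket appropriately (H[X,Y] = [HX,Y] = [X,HY]), define τₙᵐ = (2m+1)t·H·K_{m+n-1} + φⁿσ₀. Then [τₗᵐ, τₙᵐ] = 2(l-n)·H·τ_{l+n-1}ᵐ for all m ≥ 1 and l,n ≥ 0. -/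
/-- Abstract τ-symmetry algebra: given the bracket identities satisfied by the
`K` symmetries and `s n = φⁿσ₀`, the τ symmetries
`τₙᵐ = (2m+1)t·H·K_{m+n-1} + φⁿσ₀` satisfy
`[τₗᵐ, τₙᵐ] = 2(l-n)·H·τ_{l+n-1}ᵐ`. -/
theorem tau_symmetry_algebra {V : Type*} [AddCommGroup V] [Module ℝ V]
    (B : V →ₗ[ℝ] V →ₗ[ℝ] V) (hanti : ∀ X Y : V, B X Y = -B Y X)
    (K s : ℕ → V) (H φ : V →ₗ[ℝ] V) (t : ℝ)
    (hHφ : ∀ X : V, H (φ X) = φ (H X))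
    (hs : ∀ n, s (n + 1) = φ (s n))
    (hHBl : ∀ X Y : V, B (H X) Y = H (B X Y))
    (hHBr : ∀ X Y : V, B X (H Y) = H (B X Y))
    (hKσ0 : ∀ m : ℕ, 1 ≤ m → B (K m) (s 0) = ((2 * (m : ℝ) + 1)) • H (K (m - 1)))
    (hKs : ∀ m n : ℕ, B (K m) (s n) = ((2 * (m : ℝ) + 1)) • H (K (m + n - 1)))
    (hss : ∀ l n : ℕ,
      B (s l) (s n) = (2 * (l : ℝ) - 2 * (n : ℝ)) • (φ ^ (l + n - 1)) (H (s 0)))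
    (hKK : ∀ i j : ℕ, B (K i) (K j) = 0) :
    ∀ (m l n : ℕ), 1 ≤ m →
      B (((2 * (m : ℝ) + 1) * t) • H (K (m + l - 1)) + s l)
        (((2 * (m : ℝ) + 1) * t) • H (K (m + n - 1)) + s n)
        = (2 * (l : ℝ) - 2 * (n : ℝ)) •
            H (((2 * (m : ℝ) + 1) * t) • H (K (m + (l + n - 1) - 1)) + s (l + n - 1)) := by

  intro m l n hm
  have hHs : ∀ k, H (s k) = (φ ^ k) (H (s 0)) := by
    intro k
    induction k with
    | zero => simp
    | succ k ih =>
        rw [hs, hHφ, ih, pow_succ']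
        rfl
  have hidx : (m + l - 1) + n - 1 = (m + n - 1) + l - 1 := by omega
  have expand : B (((2 * (m : ℝ) + 1) * t) • H (K (m + l - 1)) + s l)
        (((2 * (m : ℝ) + 1) * t) • H (K (m + n - 1)) + s n)
      = ((2 * (m : ℝ) + 1) * t) • ((2 * (m : ℝ) + 1) * t) •
          (H (H (B (K (m + l - 1)) (K (m + n - 1)))))
        + ((2 * (m : ℝ) + 1) * t) • (H (B (K (m + l - 1)) (s n)))
        + ((2 * (m : ℝ) + 1) * t) • (- H (B (K (m + n - 1)) (s l)))
        + B (s l) (s n) := by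
    simp only [map_add, map_smul, LinearMap.add_apply, LinearMap.smul_apply,
      hHBl, hHBr, smul_neg]
    rw [hanti (s l) (K (m + n - 1)), map_neg]
    module
  rw [expand, hKK, hKs, hKs, hss, hidx]
  simp only [map_zero, smul_zero, map_add, map_smul, zero_add]
  set Z := H (H (K (m + n - 1 + l - 1))) with hZ
  rw [hHs (l + n - 1)]
  by_cases h0 : l = 0 ∧ n = 0
  · obtain ⟨rfl, rfl⟩ := h0
    simp
  · have hidx3 : m + (l + n - 1) - 1 = (m + n - 1) + l - 1 := by omega
    rw [hidx3]
    have hcl : ((m + l - 1 : ℕ) : ℝ) = (m : ℝ) + l - 1 := by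
      have h1 : 1 ≤ m + l := by omega
      push_cast [Nat.cast_sub h1]
      ring
    have hcn : ((m + n - 1 : ℕ) : ℝ) = (m : ℝ) + n - 1 := by
      have h1 : 1 ≤ m + n := by omega
      push_cast [Nat.cast_sub h1]
      ring
    rw [hcl, hcn]
    module
end
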